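/- Case (IV), construction: Let η be a character of Γ with η|_Λ = ξ. There exists a least positive integer N with c_N = 0, and N ≤ r. Let L(η) be the N-dimensional ℂ-vector space with basis v₀, …, v_{N−1}, and define ρ(h)·v_i = η(h)·χ₁(h)^i·v_i, X·v_i = v_{i+1} (with v_N := 0), and Y·v_i = c_i·v_{i−1} (with v_{−1} := 0). Then (L(η), ρ, X, Y) is a case-IV representation, and it is irreducible. -/
import Mathlib


noncomputable section

/-- `(V, ρ, X, Y)` is a representation of the common part of the rank-2 algebra `A(ξ)`:
`ρ` is a group homomorphism (recorded via multiplicativity and unitality),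
`ρ(h)∘X = χ₁(h)·(X∘ρ(h))` and `ρ(h)∘Y = χ₂(h)·(Y∘ρ(h))` for all `h ∈ Γ`, and
`ρ(g) = ξ(g)·id` for all `g ∈ Λ`. -/
def IsRep {Γ : Type*} [CommGroup Γ] (χ₁ χ₂ : Γ →* ℂˣ) (Λ : Subgroup Γ) (ξ : ↥Λ →* ℂˣ)
    {V : Type*} [AddCommGroup V] [Module ℂ V]
    (ρ : Γ → Module.End ℂ V) (X Y : Module.End ℂ V) : Prop :=
  (∀ a b : Γ, ρ (a * b) = ρ a * ρ b) ∧ ρ 1 = 1 ∧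
  (∀ h : Γ, ρ h * X = (χ₁ h : ℂ) • (X * ρ h)) ∧
  (∀ h : Γ, ρ h * Y = (χ₂ h : ℂ) • (Y * ρ h)) ∧
  ∀ g : Λ, ρ (g : Γ) = (ξ g : ℂ) • (1 : Module.End ℂ V)

/-- A subspace `W` is stable under `X`, `Y` and all `ρ(h)`. -/
def Stable2 {Γ : Type*} {V : Type*} [AddCommGroup V] [Module ℂ V]
    (ρ : Γ → Module.End ℂ V) (X Y : Module.End ℂ V) (W : Submodule ℂ V) : Prop :=
  (∀ v ∈ W, X v ∈ W) ∧ (∀ v ∈ W, Y v ∈ W) ∧ ∀ h : Γ, ∀ v ∈ W, ρ h v ∈ W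

/-- Irreducibility: `V ≠ 0` and the only subspaces stable under `X`, `Y` and all `ρ(h)`
are `0` and `V`. -/
def Irred2 {Γ : Type*} {V : Type*} [AddCommGroup V] [Module ℂ V]
    (ρ : Γ → Module.End ℂ V) (X Y : Module.End ℂ V) : Prop :=
  (∃ v : V, v ≠ 0) ∧ ∀ W : Submodule ℂ V, Stable2 ρ X Y W → W = ⊥ ∨ W = ⊤

/-- The sequence `c_i` defined by `c₀ = c` and
`c_i = q·(c_{i−1} + ν − ν·q^{2(i−1)}·γ)` for `i ≥ 1`. -/
def cseq (q ν γ c : ℂ) : ℕ → ℂ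
  | 0 => c
  | i + 1 => q * (cseq q ν γ c i + ν - ν * q ^ (2 * i) * γ)

/-- `(V, ρ, X, Y)` is a case-IV representation: a representation with in addition
`X^r = 0`, `Y^r = 0` and `X∘Y = q⁻¹·(Y∘X) + ρ(g₁g₂) − id`, where `q = χ₁(g₁)`. -/
def IsRepIV {Γ : Type*} [CommGroup Γ] (g₁ g₂ : Γ) (χ₁ χ₂ : Γ →* ℂˣ)
    (Λ : Subgroup Γ) (ξ : ↥Λ →* ℂˣ) (r : ℕ)
    {V : Type*} [AddCommGroup V] [Module ℂ V]
    (ρ : Γ → Module.End ℂ V) (X Y : Module.End ℂ V) : Prop :=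
  IsRep χ₁ χ₂ Λ ξ ρ X Y ∧ X ^ r = 0 ∧ Y ^ r = 0 ∧
    X * Y = (((χ₁ g₁ : ℂˣ) : ℂ))⁻¹ • (Y * X) + ρ (g₁ * g₂) - 1

/-- The action of `h ∈ Γ` on `L(η)`, with `ρ(h)·v_i = η(h)·χ₁(h)^i·v_i` on the basis
`v₀, …, v_{N−1}` of `Fin N → ℂ`. -/
def fRho (N : ℕ) {Γ : Type*} [CommGroup Γ] (χ₁ η : Γ →* ℂˣ) (h : Γ) :
    Module.End ℂ (Fin N → ℂ) where
  toFun v := fun j => (η h : ℂ) * (χ₁ h : ℂ) ^ (j : ℕ) * v j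
  map_add' v w := by funext j; simp [mul_add]
  map_smul' a v := by funext j; simp [smul_eq_mul]; ring

/-- The operator `X` on `L(η)`, with `X·v_i = v_{i+1}` and `v_N := 0`. -/
def fX (N : ℕ) : Module.End ℂ (Fin N → ℂ) where
  toFun v := fun j => if h : (j : ℕ) = 0 then 0
    else v ⟨(j : ℕ) - 1, lt_of_le_of_lt (Nat.sub_le _ 1) j.isLt⟩
  map_add' v w := by funext j; by_cases h : (j : ℕ) = 0 <;> simp [h]
  map_smul' a v := by funext j; by_cases h : (j : ℕ) = 0 <;> simp [h]

/-- The operator `Y` on `L(η)`, with `Y·v_i = c_i·v_{i−1}` and `v_{−1} := 0`. -/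
def fY (N : ℕ) (cs : ℕ → ℂ) : Module.End ℂ (Fin N → ℂ) where
  toFun v := fun j => if h : (j : ℕ) + 1 < N then cs ((j : ℕ) + 1) * v ⟨(j : ℕ) + 1, h⟩ else 0
  map_add' v w := by funext j; by_cases h : (j : ℕ) + 1 < N <;> simp [h, mul_add]
  map_smul' a v := by
    funext j; by_cases h : (j : ℕ) + 1 < N <;> simp [h, smul_eq_mul] <;> ring


section CaseIVAux

lemma cseq_closed (q g : ℂ) (i : ℕ) :
    (1 - q) * cseq q 1 g 0 i = (q ^ i - 1) * (g * q ^ i - q) := by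
  induction i with
  | zero => simp [cseq]
  | succ n ih =>
    show (1 - q) * (q * (cseq q 1 g 0 n + 1 - 1 * q ^ (2 * n) * g)) = _
    rw [two_mul, pow_add, pow_succ]
    linear_combination q * ih

lemma fRho_apply {Γ : Type*} [CommGroup Γ] (N : ℕ) (χ₁ η : Γ →* ℂˣ) (h : Γ)
    (v : Fin N → ℂ) (j : Fin N) :
    fRho N χ₁ η h v j = (η h : ℂ) * (χ₁ h : ℂ) ^ (j : ℕ) * v j := rfl

lemma fX_apply (N : ℕ) (v : Fin N → ℂ) (j : Fin N) :
    fX N v j = if h : (j : ℕ) = 0 then 0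
      else v ⟨(j : ℕ) - 1, lt_of_le_of_lt (Nat.sub_le _ 1) j.isLt⟩ := rfl

lemma fY_apply (N : ℕ) (cs : ℕ → ℂ) (v : Fin N → ℂ) (j : Fin N) :
    fY N cs v j = if h : (j : ℕ) + 1 < N then cs ((j : ℕ) + 1) * v ⟨(j : ℕ) + 1, h⟩
      else 0 := rfl

lemma fX_pow_zero_apply (N k : ℕ) (v : Fin N → ℂ) (j : Fin N) (h : (j : ℕ) < k) :
    ((fX N ^ k) v) j = 0 := by
  induction k generalizing v j with
  | zero => omega
  | succ k ih =>
    rw [pow_succ', Module.End.mul_apply, fX_apply]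
    by_cases hj : (j : ℕ) = 0
    · rw [dif_pos hj]
    · rw [dif_neg hj]
      exact ih _ ⟨(j : ℕ) - 1, lt_of_le_of_lt (Nat.sub_le _ 1) j.isLt⟩ (by simp; omega)

lemma fY_pow_zero_apply (N : ℕ) (cs : ℕ → ℂ) (k : ℕ) (v : Fin N → ℂ) (j : Fin N)
    (h : N ≤ (j : ℕ) + k) : ((fY N cs ^ k) v) j = 0 := by
  induction k generalizing v j with
  | zero => exact absurd j.isLt (by omega)
  | succ k ih =>
    rw [pow_succ', Module.End.mul_apply, fY_apply]
    by_cases hj : (j : ℕ) + 1 < N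
    · rw [dif_pos hj, ih _ ⟨(j : ℕ) + 1, hj⟩ (by simp; omega), mul_zero]
    · rw [dif_neg hj]

end CaseIVAux

/-- Case (IV), construction: for a character `η` of `Γ` with `η|_Λ = ξ`, there is a least
positive integer `N` with `c_N = 0`, it satisfies `N ≤ r`, and for this `N` the space
`L(η) = Fin N → ℂ` with `ρ(h)·v_i = η(h)·χ₁(h)^i·v_i`, `X·v_i = v_{i+1}` (`v_N := 0`),
`Y·v_i = c_i·v_{i−1}` (`v_{−1} := 0`) is an irreducible case-IV representation.
Here `c_i = cseq q 1 (η(g₁g₂)) 0 i`, i.e. `c₀ = 0`, `c_i = q(c_{i−1} + 1 − q^{2(i−1)}η(g₁g₂))`. -/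
theorem caseIV_construction {Γ : Type*} [CommGroup Γ] [Fintype Γ] (g₁ g₂ : Γ)
    (χ₁ χ₂ : Γ →* ℂˣ) (hχ₂ : χ₂ = χ₁⁻¹) (h12 : χ₁ g₂ * χ₂ g₁ = 1)
    (r : ℕ) (hr : 1 < r) (hq : IsPrimitiveRoot ((χ₁ g₁ : ℂˣ) : ℂ) r)
    (Λ : Subgroup Γ) (hΛ : ∀ g : Γ, g ∈ Λ ↔ (χ₁ g = 1 ∧ χ₂ g = 1)) (ξ : ↥Λ →* ℂˣ)
    (η : Γ →* ℂˣ) (hη : ∀ g : Λ, η (g : Γ) = ξ g) :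
    (∃ N : ℕ, 0 < N ∧ N ≤ r ∧
        cseq ((χ₁ g₁ : ℂˣ) : ℂ) 1 ((η (g₁ * g₂) : ℂˣ) : ℂ) 0 N = 0) ∧
      ∀ N : ℕ, 0 < N → cseq ((χ₁ g₁ : ℂˣ) : ℂ) 1 ((η (g₁ * g₂) : ℂˣ) : ℂ) 0 N = 0 →
        (∀ m : ℕ, 0 < m →
          cseq ((χ₁ g₁ : ℂˣ) : ℂ) 1 ((η (g₁ * g₂) : ℂˣ) : ℂ) 0 m = 0 → N ≤ m) →
        IsRepIV g₁ g₂ χ₁ χ₂ Λ ξ r (fRho N χ₁ η) (fX N)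
            (fY N (cseq ((χ₁ g₁ : ℂˣ) : ℂ) 1 ((η (g₁ * g₂) : ℂˣ) : ℂ) 0)) ∧
          Irred2 (fRho N χ₁ η) (fX N)
            (fY N (cseq ((χ₁ g₁ : ℂˣ) : ℂ) 1 ((η (g₁ * g₂) : ℂˣ) : ℂ) 0)) := by
  classical
  set q : ℂ := ((χ₁ g₁ : ℂˣ) : ℂ) with hqdef
  set γ : ℂ := ((η (g₁ * g₂) : ℂˣ) : ℂ) with hgdef
  set cs : ℕ → ℂ := cseq q 1 γ 0 with hcsdef
  have hq0 : q ≠ 0 := Units.ne_zero _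
  have hq1 : q ≠ 1 := hq.ne_one hr
  have hq1' : (1 : ℂ) - q ≠ 0 := sub_ne_zero.mpr (Ne.symm hq1)
  have hqr : q ^ r = 1 := hq.pow_eq_one
  have hc0 : cs 0 = 0 := rfl
  have hrec : ∀ i : ℕ, cs (i + 1) = q * (cs i + 1 - q ^ (2 * i) * γ) := by
    intro i
    show q * (cs i + 1 - 1 * q ^ (2 * i) * γ) = _
    ring
  have hclosed : ∀ i : ℕ, (1 - q) * cs i = (q ^ i - 1) * (γ * q ^ i - q) :=
    fun i => cseq_closed q γ i
  have hcr : cs r = 0 := by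
    have h := hclosed r
    rw [hqr, sub_self, zero_mul] at h
    exact (mul_eq_zero.mp h).resolve_left hq1'
  refine ⟨⟨r, by omega, le_rfl, hcr⟩, ?_⟩
  intro N hN hcN hmin
  have hNr : N ≤ r := hmin r (by omega) hcr
  have hcne : ∀ j : ℕ, 0 < j → j < N → cs j ≠ 0 :=
    fun j hj1 hj2 hc => absurd (hmin j hj1 hc) (by omega)
  have hg2 : ((χ₁ g₂ : ℂˣ) : ℂ) = q := by
    have h := h12
    rw [hχ₂] at h
    have : χ₁ g₂ = χ₁ g₁ := by
      have := mul_inv_eq_one.mp (by simpa using h)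
      exact this
    rw [this]
  have hg12 : ((χ₁ (g₁ * g₂) : ℂˣ) : ℂ) = q * q := by
    rw [map_mul, Units.val_mul, hg2]
  have hχ₂c : ∀ h : Γ, ((χ₂ h : ℂˣ) : ℂ) = (((χ₁ h : ℂˣ) : ℂ))⁻¹ := by
    intro h; rw [hχ₂]; simp
  constructor
  · refine ⟨⟨?_, ?_, ?_, ?_, ?_⟩, ?_, ?_, ?_⟩
    · -- multiplicativity
      intro a b
      refine LinearMap.ext fun v => funext fun j => ?_
      simp only [Module.End.mul_apply, fRho_apply, map_mul, Units.val_mul, mul_pow]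
      ring
    · -- unit
      refine LinearMap.ext fun v => funext fun j => ?_
      simp [fRho_apply]
    · -- commutation with X
      intro h
      refine LinearMap.ext fun v => funext fun j => ?_
      simp only [Module.End.mul_apply, LinearMap.smul_apply, Pi.smul_apply, smul_eq_mul,
        fRho_apply, fX_apply]
      by_cases hj : (j : ℕ) = 0
      · rw [dif_pos hj, dif_pos hj]; ring
      · rw [dif_neg hj, dif_neg hj]
        have hp : ((χ₁ h : ℂˣ) : ℂ) ^ (j : ℕ)
            = (χ₁ h : ℂ) * (χ₁ h : ℂ) ^ ((j : ℕ) - 1) := by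
          conv_lhs => rw [show (j : ℕ) = ((j : ℕ) - 1) + 1 from by omega]
          rw [pow_succ]; ring
        rw [hp]; ring
    · -- commutation with Y
      intro h
      refine LinearMap.ext fun v => funext fun j => ?_
      simp only [Module.End.mul_apply, LinearMap.smul_apply, Pi.smul_apply, smul_eq_mul,
        fRho_apply, fY_apply]
      by_cases hj : (j : ℕ) + 1 < N
      · rw [dif_pos hj, dif_pos hj, hχ₂c h, pow_succ]
        have hne : ((χ₁ h : ℂˣ) : ℂ) ≠ 0 := Units.ne_zero _
        field_simp
      · rw [dif_neg hj, dif_neg hj]; ring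
    · -- action on Λ
      intro g
      refine LinearMap.ext fun v => funext fun j => ?_
      have h1 : χ₁ (g : Γ) = 1 := ((hΛ g).mp g.2).1
      simp [fRho_apply, hη g, h1]
    · -- X^r = 0
      refine LinearMap.ext fun v => funext fun j => ?_
      simp only [LinearMap.zero_apply, Pi.zero_apply]
      exact fX_pow_zero_apply N r v j (lt_of_lt_of_le j.isLt hNr)
    · -- Y^r = 0
      refine LinearMap.ext fun v => funext fun j => ?_
      simp only [LinearMap.zero_apply, Pi.zero_apply]
      exact fY_pow_zero_apply N cs r v j (by omega)
    · -- the key relation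
      refine LinearMap.ext fun v => funext fun j => ?_
      simp only [Module.End.mul_apply, LinearMap.add_apply, LinearMap.sub_apply,
        LinearMap.smul_apply, Module.End.one_apply, Pi.add_apply, Pi.sub_apply,
        Pi.smul_apply, smul_eq_mul, fX_apply, fY_apply, fRho_apply, hg12]
      rw [← hgdef]
      have h2 : (q * q) ^ (j : ℕ) = q ^ (2 * (j : ℕ)) := by
        rw [mul_pow, two_mul, pow_add]
      by_cases hj0 : (j : ℕ) = 0
      · rw [dif_pos hj0]
        by_cases hjN : (j : ℕ) + 1 < N
        · rw [dif_pos hjN, dif_neg (by omega : ¬ (j:ℕ) + 1 = 0)]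
          have he : cs ((j:ℕ) + 1) = q * (1 - γ) := by
            rw [hrec, hj0, hc0, pow_zero]; ring
          rw [he]
          simp only [Nat.add_sub_cancel, Fin.eta]
          rw [hj0]
          field_simp
          ring
        · rw [dif_neg hjN]
          have hN1 : N = 1 := by omega
          have hγ1 : γ = 1 := by
            have h := hcN
            rw [hN1, hrec 0, hc0] at h
            have hz := (mul_eq_zero.mp h).resolve_left hq0
            linear_combination -hz
          rw [hγ1, hj0]
          ring
      · have hlt : ((j : ℕ) - 1) + 1 < N := by omega
        rw [dif_neg hj0, dif_pos hlt]
        have hfin : (⟨((j:ℕ) - 1) + 1, hlt⟩ : Fin N) = j := by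
          apply Fin.ext; simp; omega
        rw [hfin]
        have hjj : ((j:ℕ) - 1) + 1 = (j : ℕ) := by omega
        rw [hjj]
        by_cases hjN : (j : ℕ) + 1 < N
        · rw [dif_pos hjN, dif_neg (by omega : ¬ (j:ℕ) + 1 = 0)]
          simp only [Nat.add_sub_cancel, Fin.eta]
          rw [hrec, h2]
          field_simp
          ring
        · rw [dif_neg hjN]
          have hNj : N = (j : ℕ) + 1 := by omega
          have h := hcN
          rw [hNj, hrec] at h
          have h3 : cs (j:ℕ) = q ^ (2 * (j:ℕ)) * γ - 1 := by
            have := (mul_eq_zero.mp h).resolve_left hq0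
            linear_combination this
          rw [h3, h2]
          ring
  · -- irreducibility
    constructor
    · refine ⟨Pi.single (⟨0, hN⟩ : Fin N) (1 : ℂ), fun h0 => ?_⟩
      have := congrFun h0 ⟨0, hN⟩
      simp [Pi.single_apply] at this
    · intro W hst
      by_cases hWbot : W = ⊥
      · exact Or.inl hWbot
      right
      obtain ⟨w, hwW, hw0⟩ := Submodule.exists_mem_ne_zero_of_ne_bot hWbot
      have hlamb : ∀ i j : Fin N, i ≠ j →
          (η g₁ : ℂ) * q ^ (i : ℕ) ≠ (η g₁ : ℂ) * q ^ (j : ℕ) := by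
        intro i j hij h
        have hη0 : ((η g₁ : ℂˣ) : ℂ) ≠ 0 := Units.ne_zero _
        have h2 : q ^ (i : ℕ) = q ^ (j : ℕ) := mul_left_cancel₀ hη0 h
        exact hij (Fin.ext (hq.pow_inj (lt_of_lt_of_le i.isLt hNr)
          (lt_of_lt_of_le j.isLt hNr) h2))
      have extract : ∀ n (u : Fin N → ℂ), u ∈ W →
          (Finset.univ.filter fun k => u k ≠ 0).card ≤ n →
          ∀ i, u i ≠ 0 → Pi.single i (1 : ℂ) ∈ W := by
        intro n
        induction n with
        | zero =>
          intro u hu hcard i hi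
          have hmem : i ∈ Finset.univ.filter fun k => u k ≠ 0 := by simp [hi]
          have := Finset.card_pos.mpr ⟨i, hmem⟩
          omega
        | succ n ih =>
          intro u hu hcard i hi
          by_cases hall : ∀ k, u k ≠ 0 → k = i
          · have heq : (Pi.single i (1 : ℂ) : Fin N → ℂ) = (u i)⁻¹ • u := by
              funext k
              by_cases hk : k = i
              · subst hk; simp [Pi.single_eq_same, inv_mul_cancel₀ hi]
              · have hzero : u k = 0 := by
                  by_contra hc; exact hk (hall k hc)
                simp [Pi.single_eq_of_ne hk, hzero]
            rw [heq]; exact W.smul_mem _ hu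
          · push_neg at hall
            obtain ⟨m, hm0, hmi⟩ := hall
            set u' : Fin N → ℂ := fRho N χ₁ η g₁ u - ((η g₁ : ℂ) * q ^ (m : ℕ)) • u
              with hu'def
            have hu'W : u' ∈ W := W.sub_mem (hst.2.2 g₁ u hu) (W.smul_mem _ hu)
            have hu'k : ∀ k, u' k
                = ((η g₁ : ℂ) * q ^ (k : ℕ) - (η g₁ : ℂ) * q ^ (m : ℕ)) * u k := by
              intro k
              simp only [hu'def, Pi.sub_apply, Pi.smul_apply, smul_eq_mul, fRho_apply]
              ring
            have hu'i : u' i ≠ 0 := by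
              rw [hu'k]
              exact mul_ne_zero (sub_ne_zero.mpr (hlamb i m (Ne.symm hmi))) hi
            have hsub : (Finset.univ.filter fun k => u' k ≠ 0) ⊆
                (Finset.univ.filter fun k => u k ≠ 0).erase m := by
              intro k hk
              simp only [Finset.mem_filter, Finset.mem_univ, true_and] at hk
              refine Finset.mem_erase.mpr ⟨?_, ?_⟩
              · intro hkm; subst hkm; apply hk; rw [hu'k]; simp
              · simp only [Finset.mem_filter, Finset.mem_univ, true_and]
                intro hk0; apply hk; rw [hu'k, hk0, mul_zero]
            have hcard' : (Finset.univ.filter fun k => u' k ≠ 0).card ≤ n := by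
              have h1 := Finset.card_le_card hsub
              have hm : m ∈ Finset.univ.filter fun k => u k ≠ 0 := by simp [hm0]
              have h2 := Finset.card_erase_of_mem hm
              omega
            exact ih u' hu'W hcard' i hu'i
      obtain ⟨i, hi⟩ : ∃ i, w i ≠ 0 := by
        by_contra h; push_neg at h; exact hw0 (funext fun k => h k)
      have hsingle : Pi.single i (1 : ℂ) ∈ W := extract _ w hwW le_rfl i hi
      have hXs : ∀ (k : ℕ) (hk1 : k + 1 < N),
          fX N (Pi.single (⟨k, by omega⟩ : Fin N) (1 : ℂ))
            = Pi.single (⟨k + 1, hk1⟩ : Fin N) 1 := by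
        intro k hk1
        funext m
        rw [fX_apply]
        by_cases hm : (m : ℕ) = 0
        · rw [dif_pos hm, Pi.single_apply, if_neg]
          intro hEq
          rw [Fin.ext_iff] at hEq
          simp only [Fin.val_mk] at hEq
          omega
        · rw [dif_neg hm]
          simp only [Pi.single_apply, Fin.ext_iff, Fin.val_mk]
          by_cases h1 : (m : ℕ) - 1 = k
          · rw [if_pos h1, if_pos (by omega)]
          · rw [if_neg h1, if_neg (by omega)]
      have hYs : ∀ (k : ℕ) (hk1 : k + 1 < N),
          fY N cs (Pi.single (⟨k + 1, hk1⟩ : Fin N) (1 : ℂ))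
            = cs (k + 1) • (Pi.single (⟨k, by omega⟩ : Fin N) 1 : Fin N → ℂ) := by
        intro k hk1
        funext m
        rw [fY_apply]
        simp only [Pi.smul_apply, smul_eq_mul, Pi.single_apply, Fin.ext_iff, Fin.val_mk]
        by_cases hm : (m : ℕ) + 1 < N
        · rw [dif_pos hm]
          by_cases h1 : (m : ℕ) = k
          · simp [h1]
          · rw [if_neg (by omega), if_neg h1, mul_zero, mul_zero]
        · rw [dif_neg hm, if_neg (by omega), mul_zero]
      have down : ∀ k : ℕ, ∀ hk : k < N, Pi.single (⟨k, hk⟩ : Fin N) (1 : ℂ) ∈ W →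
          Pi.single (⟨0, hN⟩ : Fin N) (1 : ℂ) ∈ W := by
        intro k
        induction k with
        | zero => intro hk h; exact h
        | succ k ihk =>
          intro hk h
          have hY := hst.2.1 _ h
          rw [hYs k hk] at hY
          have hmem : Pi.single (⟨k, by omega⟩ : Fin N) (1 : ℂ) ∈ W := by
            have hsm := W.smul_mem (cs (k + 1))⁻¹ hY
            rwa [smul_smul, inv_mul_cancel₀ (hcne (k + 1) (by omega) hk), one_smul] at hsm
          exact ihk (by omega) hmem
      have up : ∀ k : ℕ, ∀ hk : k < N, Pi.single (⟨k, hk⟩ : Fin N) (1 : ℂ) ∈ W := by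
        intro k
        induction k with
        | zero =>
          intro hk
          have h := down i.1 i.isLt (by rw [Fin.eta]; exact hsingle)
          exact h
        | succ k ihk =>
          intro hk
          have h1 : k < N := by omega
          have hX := hst.1 _ (ihk h1)
          rw [hXs k hk] at hX
          exact hX
      apply Submodule.eq_top_iff'.mpr
      intro v
      have hv : v = ∑ k : Fin N, v k • (Pi.single k 1 : Fin N → ℂ) := by
        funext m
        simp [Finset.sum_apply, Pi.single_apply]
      rw [hv]
      refine Submodule.sum_mem _ fun k _ => W.smul_mem _ ?_
      have h := up k.1 k.isLt
      rwa [Fin.eta] at h
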